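/- arXiv:1902.04332 — 2 statements merged into one kernel-verified Lean document; each statement's English description precedes it below -/
import Mathlib

section
/- Let A ∈ ℝ^{n×n} be row-stochastic and v(x) = max_i x_i - min_i x_i. Then v(Ax) < v(x) holds for every x not in the span of the all-ones vector if and only if A is scrambling. -/
open MeasureTheory Filter

def IsStochastic {n : ℕ} (A : Matrix (Fin n) (Fin n) ℝ) : Prop :=
  (∀ i j, 0 ≤ A i j) ∧ ∀ i, ∑ j, A i j = 1

noncomputable def tau {n : ℕ} (A : Matrix (Fin n) (Fin n) ℝ) : ℝ :=
  1 - ⨅ p : Fin n × Fin n, ∑ s, min (A p.1 s) (A p.2 s)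

def Scrambling {n : ℕ} (A : Matrix (Fin n) (Fin n) ℝ) : Prop :=
  ∀ i j, ∃ s, 0 < A i s ∧ 0 < A j s

noncomputable def spread {n : ℕ} (x : Fin n → ℝ) : ℝ := (⨆ i, x i) - ⨅ i, x i

/-!
Dobrushin's estimate: if two probability rows `a`, `b` share the mass `∑ₛ min (a s) (b s)`,
that common part cancels in `a ⬝ᵥ x - b ⬝ᵥ x`, and each remaining part has total mass
`1 - ∑ₛ min (a s) (b s)`, so `a ⬝ᵥ x - b ⬝ᵥ x ≤ (1 - ∑ₛ min (a s) (b s)) · spread x`.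
For a scrambling matrix every pair of rows overlaps, so the spread of a non-constant vector
strictly drops. Conversely, if rows `i` and `j` have disjoint supports, the indicator of the
support of row `i` has spread `1`, while `A *ᵥ x` takes the values `1` at `i` and `0` at `j`.
-/

open Finset Matrix

section Overlap

variable {ι : Type*} [Fintype ι]

theorem dotProduct_sub_dotProduct_le_overlap_mul {a b x : ι → ℝ} {m M : ℝ}
    (ha : ∑ s, a s = 1) (hb : ∑ s, b s = 1) (hm : ∀ s, m ≤ x s) (hM : ∀ s, x s ≤ M) :
    a ⬝ᵥ x - b ⬝ᵥ x ≤ (1 - ∑ s, min (a s) (b s)) * (M - m) := by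
  have hrest {c : ι → ℝ} (hc : ∑ s, c s = 1) :
      ∑ s, (c s - min (a s) (b s)) = 1 - ∑ s, min (a s) (b s) := by
    rw [sum_sub_distrib, hc]
  have hupper : ∑ s, (a s - min (a s) (b s)) * x s ≤ (1 - ∑ s, min (a s) (b s)) * M := by
    rw [← hrest ha, sum_mul]
    exact sum_le_sum fun s _ => mul_le_mul_of_nonneg_left (hM s) (sub_nonneg.2 (min_le_left _ _))
  have hlower : (1 - ∑ s, min (a s) (b s)) * m ≤ ∑ s, (b s - min (a s) (b s)) * x s := by
    rw [← hrest hb, sum_mul]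
    exact sum_le_sum fun s _ =>
      mul_le_mul_of_nonneg_left (hm s) (sub_nonneg.2 (min_le_right _ _))
  have hcancel : a ⬝ᵥ x - b ⬝ᵥ x =
      ∑ s, (a s - min (a s) (b s)) * x s - ∑ s, (b s - min (a s) (b s)) * x s := by
    simp only [dotProduct, ← sum_sub_distrib]
    exact sum_congr rfl fun s _ => by ring
  linarith

theorem overlap_pos {a b : ι → ℝ} (ha : ∀ s, 0 ≤ a s) (hb : ∀ s, 0 ≤ b s)
    (hab : ∃ s, 0 < a s ∧ 0 < b s) : 0 < ∑ s, min (a s) (b s) := by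
  obtain ⟨s, has, hbs⟩ := hab
  exact sum_pos' (fun s _ => le_min (ha s) (hb s)) ⟨s, mem_univ s, lt_min has hbs⟩

end Overlap

section Spread

variable {n : ℕ}

theorem sub_le_spread (x : Fin n → ℝ) (i j : Fin n) : x i - x j ≤ spread x :=
  sub_le_sub (le_ciSup (Finite.bddAbove_range x) i) (ciInf_le (Finite.bddBelow_range x) j)

theorem exists_spread_eq_sub [Nonempty (Fin n)] (x : Fin n → ℝ) :
    ∃ i j, spread x = x i - x j := by
  obtain ⟨i, hi⟩ := exists_eq_ciSup_of_finite (f := x)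
  obtain ⟨j, hj⟩ := exists_eq_ciInf_of_finite (f := x)
  exact ⟨i, j, by rw [spread, hi, hj]⟩

theorem spread_le_of_forall_mem_Icc [Nonempty (Fin n)] {x : Fin n → ℝ} {m M : ℝ}
    (hx : ∀ s, x s ∈ Set.Icc m M) : spread x ≤ M - m := by
  obtain ⟨i, j, hij⟩ := exists_spread_eq_sub x
  linarith [(hx i).2, (hx j).1]

theorem spread_pos_of_ne_const {x : Fin n → ℝ} (hx : ∀ c : ℝ, x ≠ fun _ => c) :
    0 < spread x := by
  obtain ⟨k, -⟩ := Function.ne_iff.1 (hx 0)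
  obtain ⟨l, hl⟩ := Function.ne_iff.1 (hx (x k))
  rcases hl.lt_or_gt with h | h
  · linarith [sub_le_spread x k l]
  · linarith [sub_le_spread x l k]

end Spread

section Stochastic

variable {n : ℕ} {A : Matrix (Fin n) (Fin n) ℝ}

theorem IsStochastic.spread_mulVec_le_overlap_mul (hA : IsStochastic A) (x : Fin n → ℝ)
    (i j : Fin n) : (A *ᵥ x) i - (A *ᵥ x) j ≤ (1 - ∑ s, min (A i s) (A j s)) * spread x :=
  dotProduct_sub_dotProduct_le_overlap_mul (hA.2 i) (hA.2 j)
    (ciInf_le (Finite.bddBelow_range x)) (le_ciSup (Finite.bddAbove_range x))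

theorem IsStochastic.spread_mulVec_lt (hA : IsStochastic A) (hS : Scrambling A)
    {x : Fin n → ℝ} (hx : ∀ c : ℝ, x ≠ fun _ => c) : spread (A *ᵥ x) < spread x := by
  have hpos := spread_pos_of_ne_const hx
  obtain ⟨k, -⟩ := Function.ne_iff.1 (hx 0)
  have : Nonempty (Fin n) := ⟨k⟩
  obtain ⟨i, j, hij⟩ := exists_spread_eq_sub (A *ᵥ x)
  have hoverlap := overlap_pos (hA.1 i) (hA.1 j) (hS i j)
  calc spread (A *ᵥ x) ≤ (1 - ∑ s, min (A i s) (A j s)) * spread x :=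
        hij ▸ hA.spread_mulVec_le_overlap_mul x i j
    _ < spread x := by nlinarith

theorem IsStochastic.exists_pos (hA : IsStochastic A) (i : Fin n) : ∃ s, 0 < A i s := by
  obtain ⟨s, -, hs⟩ := exists_lt_of_sum_lt (s := univ) (f := 0) (g := A i) (by simp [hA.2 i])
  exact ⟨s, hs⟩

theorem IsStochastic.exists_ne_const_spread_le_of_not_scrambling (hA : IsStochastic A)
    (hS : ¬ Scrambling A) :
    ∃ x : Fin n → ℝ, (∀ c : ℝ, x ≠ fun _ => c) ∧ spread x ≤ spread (A *ᵥ x) := by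
  simp only [Scrambling, not_forall, not_exists, not_and, not_lt] at hS
  obtain ⟨i, j, hij⟩ := hS
  have : Nonempty (Fin n) := ⟨i⟩
  let x : Fin n → ℝ := fun s => if 0 < A i s then 1 else 0
  obtain ⟨s, hs⟩ := hA.exists_pos i
  obtain ⟨t, ht⟩ := hA.exists_pos j
  have hti : ¬ 0 < A i t := fun h => (hij t h).not_gt ht
  refine ⟨x, fun c hc => ?_, ?_⟩
  · have hxs : x s = 1 := if_pos hs
    have hxt : x t = 0 := if_neg hti
    rw [hc] at hxs hxt
    exact one_ne_zero (hxs.symm.trans hxt)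
  have hxi : (A *ᵥ x) i = 1 := by
    rw [← hA.2 i, mulVec, dotProduct]
    refine sum_congr rfl fun s _ => ?_
    by_cases h : 0 < A i s
    · simp [x, h]
    · simp [x, le_antisymm (not_lt.1 h) (hA.1 i s)]
  have hxj : (A *ᵥ x) j = 0 := by
    rw [mulVec, dotProduct]
    refine sum_eq_zero fun s _ => ?_
    by_cases h : 0 < A i s
    · simp [x, h, le_antisymm (hij s h) (hA.1 j s)]
    · simp [x, h]
  calc spread x ≤ 1 - 0 := spread_le_of_forall_mem_Icc fun s => by
        by_cases h : 0 < A i s <;> simp [x, h]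
    _ = (A *ᵥ x) i - (A *ᵥ x) j := by rw [hxi, hxj]
    _ ≤ spread (A *ᵥ x) := sub_le_spread _ i j

end Stochastic

theorem spread_strict_decrease_iff_scrambling_general {n : ℕ}
    (A : Matrix (Fin n) (Fin n) ℝ) (hA : IsStochastic A) :
    (∀ x : Fin n → ℝ, (∀ c : ℝ, x ≠ fun _ => c) → spread (A.mulVec x) < spread x)
      ↔ Scrambling A := by
  refine ⟨fun hdec => ?_, fun hS x hx => hA.spread_mulVec_lt hS hx⟩
  by_contra hS
  obtain ⟨x, hx, hle⟩ := hA.exists_ne_const_spread_le_of_not_scrambling hS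
  exact (hdec x hx).not_ge hle

theorem spread_strict_decrease_iff_scrambling {n : ℕ} (hn : 0 < n)
    (A : Matrix (Fin n) (Fin n) ℝ) (hA : IsStochastic A) :
    (∀ x : Fin n → ℝ, (∀ c : ℝ, x ≠ fun _ => c) → spread (A.mulVec x) < spread x)
      ↔ Scrambling A :=
  spread_strict_decrease_iff_scrambling_general A hA
end

section
/- If A is an SIA (stochastic, indecomposable, aperiodic) row-stochastic matrix, then there exists an integer l ≥ 1 such that A^l is scrambling. -/
open MeasureTheory Filter

/-- A row-stochastic matrix is SIA if its powers converge to a matrix with identical rows. -/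
def IsSIA {n : ℕ} (A : Matrix (Fin n) (Fin n) ℝ) : Prop :=
  IsStochastic A ∧ ∃ ξ : Fin n → ℝ,
    Tendsto (fun k => A ^ k) atTop (nhds (Matrix.of fun _ j => ξ j))

/-!
The powers of a stochastic matrix are stochastic, and the stochastic matrices form a closed set,
so the limit `𝟏ξᵀ` is stochastic as well: `ξ` is a probability vector and has a positive entry
`ξ s`. Every row of `A ^ k` converges to `ξ`, so for large `k` the whole column `s` of `A ^ k`
is positive, which makes `A ^ k` scrambling.
-/

open Topology Matrix

theorem isStochastic_iff_mem_rowStochastic {n : ℕ} {A : Matrix (Fin n) (Fin n) ℝ} :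
    IsStochastic A ↔ A ∈ rowStochastic ℝ (Fin n) :=
  mem_rowStochastic_iff_sum.symm

theorem Scrambling.of_forall_pos_col {n : ℕ} {A : Matrix (Fin n) (Fin n) ℝ} {s : Fin n}
    (h : ∀ i, 0 < A i s) : Scrambling A := by
  intro i j
  exact ⟨s, h i, h j⟩

namespace Matrix

variable {ι : Type*} [Fintype ι]

theorem isClosed_rowStochastic [DecidableEq ι] :
    IsClosed (rowStochastic ℝ ι : Set (Matrix ι ι ℝ)) := by
  have hentry (i j : ι) : Continuous fun M : Matrix ι ι ℝ => M i j :=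
    (continuous_apply j).comp (continuous_apply i)
  have hnonneg : IsClosed {M : Matrix ι ι ℝ | ∀ i j, 0 ≤ M i j} := by
    simp only [Set.ofPred_forall]
    exact isClosed_iInter fun i => isClosed_iInter fun j => isClosed_le continuous_const (hentry i j)
  have hsum : IsClosed {M : Matrix ι ι ℝ | M *ᵥ 1 = 1} :=
    isClosed_eq (continuous_id.matrix_mulVec continuous_const) continuous_const
  exact hnonneg.inter hsum

theorem eventually_forall_pos_col_of_tendsto {M : ℕ → Matrix ι ι ℝ} {L : Matrix ι ι ℝ}
    (hM : Tendsto M atTop (𝓝 L)) {s : ι} (hL : ∀ i, 0 < L i s) :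
    ∀ᶠ k in atTop, ∀ i, 0 < M k i s :=
  eventually_all.2 fun i =>
    (tendsto_pi_nhds.1 (tendsto_pi_nhds.1 hM i) s).eventually (eventually_gt_nhds (hL i))

end Matrix

theorem sia_pow_scrambling {n : ℕ} (hn : 0 < n) (A : Matrix (Fin n) (Fin n) ℝ)
    (hA : IsSIA A) : ∃ l : ℕ, 1 ≤ l ∧ Scrambling (A ^ l) := by
  obtain ⟨hstoch, ξ, hlim⟩ := hA
  have hpow (k : ℕ) : A ^ k ∈ rowStochastic ℝ (Fin n) :=
    pow_mem (isStochastic_iff_mem_rowStochastic.1 hstoch) k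
  have hlim_stoch := isClosed_rowStochastic.mem_of_tendsto hlim (.of_forall hpow)
  have hξ : ∑ j, ξ j = 1 := sum_row_of_mem_rowStochastic hlim_stoch ⟨0, hn⟩
  obtain ⟨s, -, hs⟩ : ∃ s ∈ Finset.univ, (0 : ℝ) < ξ s :=
    Finset.exists_lt_of_sum_lt (by simp [hξ])
  obtain ⟨l, hl, hcol⟩ :=
    ((eventually_ge_atTop 1).and (eventually_forall_pos_col_of_tendsto hlim fun _ => hs)).exists
  exact ⟨l, hl, .of_forall_pos_col hcol⟩
end
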